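/- Let C be an (n,k) MDS linear code over F with systematic generator matrix G = [I_k | P]. Fix a row index i* of P and a set T of δ column indices of P with 0 ≤ δ ≤ n − k, and let G' = [I_k | P'] be obtained from G by replacing the entries P[i*, c] by 0 for every c ∈ T, with row space C'. Let G'' = [I_k | P''] be obtained from G' by additionally replacing by 0 an arbitrary further set of entries P'[r, c] all of whose column indices c lie in T, and let C'' be the row space of G''. Then d_min(C'') = d_min(C') = n − k + 1 − δ. -/

import Mathlib

open Matrix

/-- The minimum Hamming distance of a linear code: the minimum Hamming weight of a
nonzero codeword. -/
noncomputable def dmin {F : Type*} [Field F] [DecidableEq F] {ι : Type*} [Fintype ι]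
    (C : Submodule F (ι → F)) : ℕ :=
  sInf {d | ∃ x ∈ C, x ≠ 0 ∧ hammingNorm x = d}

/-- The row space of a matrix, i.e. the linear code generated by its rows. -/
def rowSpace {F : Type*} [Field F] {κ ι : Type*} (G : Matrix κ ι F) :
    Submodule F (ι → F) :=
  Submodule.span F (Set.range fun i => G i)

/-- The systematic generator matrix `[I_k | P]`. -/
def sysGen {F : Type*} [Field F] [DecidableEq F] {k m : ℕ}
    (P : Matrix (Fin k) (Fin m) F) : Matrix (Fin k) (Fin k ⊕ Fin m) F :=
  Matrix.fromCols 1 P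

lemma hammingNorm_sumElim {α β F : Type*} [Fintype α] [Fintype β] [DecidableEq F] [Zero F]
    (u : α → F) (v : β → F) :
    hammingNorm (Sum.elim u v) = hammingNorm u + hammingNorm v := by
  simp only [hammingNorm, ← Fintype.card_subtype]
  rw [Fintype.card_congr (Equiv.subtypeSum (p := fun i => Sum.elim u v i ≠ 0)),
    Fintype.card_sum]
  rfl

lemma mem_rowSpace_iff {F : Type*} [Field F] {κ ι : Type*} [Fintype κ]
    (G : Matrix κ ι F) (x : ι → F) :
    x ∈ rowSpace G ↔ ∃ a : κ → F, x = a ᵥ* G := by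
  rw [rowSpace, Submodule.mem_span_range_iff_exists_fun]
  constructor
  · rintro ⟨a, rfl⟩
    exact ⟨a, by funext j; simp [vecMul, dotProduct, Finset.sum_apply]⟩
  · rintro ⟨a, rfl⟩
    exact ⟨a, by funext j; simp [vecMul, dotProduct, Finset.sum_apply]⟩

lemma mem_rowSpace_sysGen_iff {F : Type*} [Field F] [DecidableEq F] {k m : ℕ}
    (P : Matrix (Fin k) (Fin m) F) (x : Fin k ⊕ Fin m → F) :
    x ∈ rowSpace (sysGen P) ↔ ∃ a : Fin k → F, x = Sum.elim a (a ᵥ* P) := by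
  rw [mem_rowSpace_iff]
  simp [sysGen, Matrix.vecMul_fromCols]

lemma dmin_key {F : Type*} [Field F] [DecidableEq F] {k m : ℕ}
    (P Q : Matrix (Fin k) (Fin m) F)
    (hMDS : dmin (rowSpace (sysGen P)) = m + 1) (istar : Fin k) (T : Finset (Fin m))
    (hout : ∀ r c, c ∉ T → Q r c = P r c)
    (hrow : ∀ c ∈ T, Q istar c = 0) :
    dmin (rowSpace (sysGen Q)) = m + 1 - T.card := by
  have hTm : T.card ≤ m := by
    simpa using Finset.card_le_card (Finset.subset_univ T)
  -- MDS lower bound on P-codewords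
  have hP : ∀ a : Fin k → F, a ≠ 0 → m + 1 ≤ hammingNorm a + hammingNorm (a ᵥ* P) := by
    intro a ha
    have hmem : Sum.elim a (a ᵥ* P) ∈ rowSpace (sysGen P) :=
      (mem_rowSpace_sysGen_iff P _).2 ⟨a, rfl⟩
    have hne : Sum.elim a (a ᵥ* P) ≠ 0 := by
      intro h
      apply ha
      funext i
      simpa using congrFun h (Sum.inl i)
    have h2 : dmin (rowSpace (sysGen P)) ≤ hammingNorm (Sum.elim a (a ᵥ* P)) :=
      Nat.sInf_le ⟨_, hmem, hne, rfl⟩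
    rw [hMDS, hammingNorm_sumElim] at h2
    exact h2
  -- the unit vector at istar
  set e : Fin k → F := fun r => if r = istar then 1 else 0 with he
  have he_ne : e ≠ 0 := by
    intro h
    have := congrFun h istar
    simp [he] at this
  have heN : hammingNorm e = 1 := by
    unfold hammingNorm
    convert Finset.card_singleton istar using 2
    ext r
    by_cases h : r = istar <;> simp [he, h]
  have hvec : ∀ (M : Matrix (Fin k) (Fin m) F), e ᵥ* M = M istar := by
    intro M
    funext c
    simp [vecMul, dotProduct, he, ite_mul]
  -- row istar of P is everywhere nonzero
  have hPr : ∀ c, P istar c ≠ 0 := by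
    intro c0 hc0
    have h1 := hP e he_ne
    rw [heN, hvec] at h1
    have h2 : hammingNorm (P istar) ≤ m - 1 := by
      unfold hammingNorm
      calc ({c | P istar c ≠ 0} : Finset (Fin m)).card
          ≤ (Finset.univ.erase c0).card := by
            apply Finset.card_le_card
            intro c hc
            simp only [Finset.mem_filter] at hc
            refine Finset.mem_erase.2 ⟨?_, Finset.mem_univ _⟩
            rintro rfl
            exact hc.2 hc0
        _ = m - 1 := by simp
    have hm : 0 < m := c0.pos
    omega
  -- lower bound on Q-codeword weights
  have hlow : ∀ x ∈ rowSpace (sysGen Q), x ≠ 0 → m + 1 - T.card ≤ hammingNorm x := by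
    intro x hx hxne
    obtain ⟨a, rfl⟩ := (mem_rowSpace_sysGen_iff Q x).1 hx
    have ha : a ≠ 0 := by
      rintro rfl
      apply hxne
      funext i
      cases i <;> simp
    have hkey : hammingNorm (a ᵥ* P) ≤ hammingNorm (a ᵥ* Q) + T.card := by
      unfold hammingNorm
      calc ({c | (a ᵥ* P) c ≠ 0} : Finset (Fin m)).card
          ≤ (({c | (a ᵥ* Q) c ≠ 0} : Finset (Fin m)) ∪ T).card := by
            apply Finset.card_le_card
            intro c hc
            simp only [Finset.mem_filter] at hc
            by_cases hcT : c ∈ T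
            · exact Finset.mem_union_right _ hcT
            · refine Finset.mem_union_left _ ?_
              simp only [Finset.mem_filter]
              refine ⟨Finset.mem_univ _, ?_⟩
              have : (a ᵥ* Q) c = (a ᵥ* P) c := by
                simp only [vecMul, dotProduct]
                exact Finset.sum_congr rfl fun r _ => by rw [hout r c hcT]
              rw [this]
              exact hc.2
        _ ≤ _ := Finset.card_union_le _ _
    have h1 := hP a ha
    rw [hammingNorm_sumElim]
    omega
  -- the witness codeword
  have hwmem : Sum.elim e (e ᵥ* Q) ∈ rowSpace (sysGen Q) :=
    (mem_rowSpace_sysGen_iff Q _).2 ⟨e, rfl⟩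
  have hwne : Sum.elim e (e ᵥ* Q) ≠ 0 := by
    intro h
    apply he_ne
    funext i
    simpa using congrFun h (Sum.inl i)
  have hwN : hammingNorm (Sum.elim e (e ᵥ* Q)) = m + 1 - T.card := by
    rw [hammingNorm_sumElim, heN, hvec]
    have : hammingNorm (Q istar) = m - T.card := by
      unfold hammingNorm
      have : ({c | Q istar c ≠ 0} : Finset (Fin m)) = Tᶜ := by
        ext c
        simp only [Finset.mem_filter, Finset.mem_compl, Finset.mem_univ, true_and]
        constructor
        · intro h hcT
          exact h (hrow c hcT)
        · intro hcT
          rw [hout istar c hcT]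
          exact hPr c
      rw [this, Finset.card_compl]
      simp
    omega
  apply le_antisymm
  · exact Nat.sInf_le ⟨_, hwmem, hwne, hwN⟩
  · exact le_csInf ⟨_, _, hwmem, hwne, hwN⟩
      (by rintro d ⟨x, hx, hxne, rfl⟩; exact hlow x hx hxne)

/-- Additionally zeroing further entries of `P'` whose column indices all lie among
the `δ` already-zeroed columns does not change the minimum Hamming distance. -/
theorem dmin_zeroed_extra_in_same_columns {F : Type*} [Field F] [DecidableEq F]
    {k m : ℕ} (P : Matrix (Fin k) (Fin m) F)
    (hMDS : dmin (rowSpace (sysGen P)) = m + 1)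
    (istar : Fin k) (T : Finset (Fin m))
    (E : Finset (Fin k × Fin m)) (hE : ∀ p ∈ E, p.2 ∈ T) :
    let P' : Matrix (Fin k) (Fin m) F :=
      fun r c => if r = istar ∧ c ∈ T then 0 else P r c
    let P'' : Matrix (Fin k) (Fin m) F :=
      fun r c => if (r, c) ∈ E then 0 else P' r c
    dmin (rowSpace (sysGen P'')) = dmin (rowSpace (sysGen P')) ∧
      dmin (rowSpace (sysGen P')) = m + 1 - T.card := by
  intro P' P''
  have h1 : dmin (rowSpace (sysGen P')) = m + 1 - T.card := by
    apply dmin_key P P' hMDS istar T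
    · intro r c hc
      simp [P', hc]
    · intro c hc
      simp [P', hc]
  have h2 : dmin (rowSpace (sysGen P'')) = m + 1 - T.card := by
    apply dmin_key P P'' hMDS istar T
    · intro r c hc
      have hrc : (r, c) ∉ E := fun h => hc (hE _ h)
      simp [P'', P', hrc, hc]
    · intro c hc
      by_cases h : (istar, c) ∈ E <;> simp [P'', P', h, hc]
  rw [h1, h2]
  simp
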